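/- Let C > 0, σ_X > 0, σ_Z > 0, β = C/σ_X, and s = √(σ_X² + σ_Z²). For every y ∈ ℝ, the convolution of the truncated Gaussian density with the Gaussian density satisfies ∫_{−C}^{C} p_X̃(x) · φ((y − x)/σ_Z)/σ_Z dx = φ(y/s) · [Φ((C·s² − σ_X²·y)/(σ_X·σ_Z·s)) − Φ(−(C·s² + σ_X²·y)/(σ_X·σ_Z·s))] / (erf(β/√2) · s). Consequently, if X̃ has the truncated Gaussian law with density p_X̃ and Z̃ is an independent centered Gaussian random variable with standard deviation σ_Z, then Y = X̃ + Z̃ has this function as its probability density with respect to Lebesgue measure. -/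

import Mathlib

open MeasureTheory ProbabilityTheory Real
open scoped ENNReal NNReal

/-- The error function `erf a = (2/√π) ∫₀^a e^{−t²} dt`. -/
noncomputable def erf (a : ℝ) : ℝ := (2 / Real.sqrt π) * ∫ t in (0:ℝ)..a, Real.exp (-t ^ 2)

/-- The standard Gaussian density `φ(a) = e^{−a²/2}/√(2π)`. -/
noncomputable def stdGauss (a : ℝ) : ℝ := Real.exp (-a ^ 2 / 2) / Real.sqrt (2 * π)

/-- The standard Gaussian CDF `Φ(a) = (1/2)(1 + erf(a/√2))`. -/
noncomputable def stdGaussCdf (a : ℝ) : ℝ := (1 / 2) * (1 + erf (a / Real.sqrt 2))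

/-- The truncated Gaussian density on `[−C, C]` with parameter `σ`. -/
noncomputable def truncGaussPdf (C σ : ℝ) (x : ℝ) : ℝ :=
  if x ∈ Set.Icc (-C) C then stdGauss (x / σ) / (σ * erf ((C / σ) / Real.sqrt 2)) else 0

/-- The closed-form density of `Y = X̃ + Z̃`, with `s = √(σ_X² + σ_Z²)`. -/
noncomputable def sumPdf (C σX σZ : ℝ) (y : ℝ) : ℝ :=
  stdGauss (y / Real.sqrt (σX ^ 2 + σZ ^ 2)) *
      (stdGaussCdf ((C * Real.sqrt (σX ^ 2 + σZ ^ 2) ^ 2 - σX ^ 2 * y) /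
          (σX * σZ * Real.sqrt (σX ^ 2 + σZ ^ 2))) -
        stdGaussCdf (-(C * Real.sqrt (σX ^ 2 + σZ ^ 2) ^ 2 + σX ^ 2 * y) /
          (σX * σZ * Real.sqrt (σX ^ 2 + σZ ^ 2))))
    / (erf ((C / σX) / Real.sqrt 2) * Real.sqrt (σX ^ 2 + σZ ^ 2))

lemma erf_diff (a b : ℝ) :
    erf b - erf a = (2 / Real.sqrt π) * ∫ t in a..b, Real.exp (-t ^ 2) := by
  have h : ∀ x y : ℝ, IntervalIntegrable (fun t => Real.exp (-t^2)) volume x y :=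
    fun x y => Continuous.intervalIntegrable (by continuity) x y
  rw [erf, erf, ← mul_sub, intervalIntegral.integral_interval_sub_left (h 0 b) (h 0 a)]

lemma gauss_interval (m τ : ℝ) (hτ : 0 < τ) (a b : ℝ) :
    ∫ x in a..b, stdGauss ((x - m) / τ) / τ
      = stdGaussCdf ((b - m) / τ) - stdGaussCdf ((a - m) / τ) := by
  have hpi : (0:ℝ) < π := Real.pi_pos
  set c : ℝ := τ * Real.sqrt 2 with hc
  have hc0 : c ≠ 0 := by positivity
  have h2 : (Real.sqrt 2)^2 = 2 := Real.sq_sqrt (by norm_num)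
  have h1 : ∀ x : ℝ, stdGauss ((x - m) / τ) / τ
      = (fun t => Real.exp (-t ^ 2) / (τ * Real.sqrt (2 * π))) (x / c - m / c) := by
    intro x
    have he : -((x - m)/τ)^2/2 = -((x - m)/c)^2 := by
      rw [hc, div_pow, div_pow, mul_pow, h2]; ring
    simp only [stdGauss, div_sub_div_same]
    rw [he]; ring
  rw [intervalIntegral.integral_congr (fun x _ => h1 x),
    intervalIntegral.integral_comp_div_sub (fun t => Real.exp (-t ^ 2) / (τ * Real.sqrt (2 * π))) hc0 (m / c)]
  have e1 : a / c - m / c = (a - m) / c := by rw [div_sub_div_same]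
  have e2 : b / c - m / c = (b - m) / c := by rw [div_sub_div_same]
  rw [e1, e2, intervalIntegral.integral_div]
  have := erf_diff ((a - m) / c) ((b - m) / c)
  rw [stdGaussCdf, stdGaussCdf, div_div, div_div, ← hc]
  have hsp : Real.sqrt (2 * π) = Real.sqrt 2 * Real.sqrt π := Real.sqrt_mul (by norm_num) _
  have hπ : Real.sqrt π ≠ 0 := by positivity
  have h2' : Real.sqrt 2 ≠ 0 := by positivity
  rw [smul_eq_mul]
  have : (∫ t in (a - m)/c..(b - m)/c, Real.exp (-t^2))
      = (Real.sqrt π / 2) * (erf ((b-m)/c) - erf ((a-m)/c)) := by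
    rw [this]; field_simp
  rw [this, hsp]
  field_simp
  ring

lemma conv_eq (C σX σZ : ℝ) (hC : 0 < C) (hσ : 0 < σX) (hσZ : 0 < σZ) (y : ℝ) :
    ∫ x in (-C)..C, truncGaussPdf C σX x * stdGauss ((y - x) / σZ) / σZ
      = sumPdf C σX σZ y := by
  have hss : (0:ℝ) < σX^2 + σZ^2 := by positivity
  set s := Real.sqrt (σX^2 + σZ^2) with hsdef
  have hs : 0 < s := Real.sqrt_pos.2 hss
  have hs2 : s^2 = σX^2 + σZ^2 := Real.sq_sqrt hss.le
  set τ := σX * σZ / s with hτdef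
  have hτ : 0 < τ := by positivity
  set m := σX^2 * y / s^2 with hmdef
  set E := erf ((C/σX)/Real.sqrt 2) with hE
  have hσX0 : σX ≠ 0 := hσ.ne'
  have hσZ0 : σZ ≠ 0 := hσZ.ne'
  have hs0 : s ≠ 0 := hs.ne'
  have hcong : Set.EqOn (fun x => truncGaussPdf C σX x * stdGauss ((y - x) / σZ) / σZ)
      (fun x => (stdGauss (y / s) / (E * s)) * (stdGauss ((x - m)/τ)/τ))
      (Set.uIcc (-C) C) := by
    intro x hx
    rw [Set.uIcc_of_le (by linarith)] at hx
    simp only [truncGaussPdf, if_pos hx, ← hE]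
    have hexp : (x/σX)^2 + ((y-x)/σZ)^2 = (y/s)^2 + ((x-m)/τ)^2 := by
      rw [hmdef, hτdef]
      field_simp
      linear_combination (σX^2*y^2 - x^2*s^2) * hs2
    have hG : stdGauss (x/σX) * stdGauss ((y-x)/σZ) = stdGauss (y/s) * stdGauss ((x-m)/τ) := by
      simp only [stdGauss, div_mul_div_comm, ← Real.exp_add]
      congr 2
      linarith [hexp]
    have hts : τ * s = σX * σZ := by rw [hτdef]; field_simp
    have step : stdGauss (x / σX) / (σX * E) * stdGauss ((y - x) / σZ) / σZ
        = stdGauss (x/σX) * stdGauss ((y-x)/σZ) / (E * (σX*σZ)) := by ring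
    rw [step, hG, ← hts]; ring
  rw [intervalIntegral.integral_congr hcong, intervalIntegral.integral_const_mul,
    gauss_interval m τ hτ (-C) C]
  have eU : (C - m)/τ = (C * s^2 - σX^2*y)/(σX*σZ*s) := by
    rw [hmdef, hτdef]; field_simp
  have eV : (-C - m)/τ = -(C * s^2 + σX^2*y)/(σX*σZ*s) := by
    rw [hmdef, hτdef]; field_simp; ring
  rw [sumPdf, ← hsdef, ← hE, ← eU, ← eV]
  ring

lemma erf_pos {a : ℝ} (ha : 0 < a) : 0 < erf a := by
  rw [erf]
  refine mul_pos (by positivity) ?_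
  exact intervalIntegral.intervalIntegral_pos_of_pos
    (Continuous.intervalIntegrable (by continuity) 0 a) (fun x => Real.exp_pos _) ha

lemma truncGaussPdf_nonneg (C σ : ℝ) (hC : 0 < C) (hσ : 0 < σ) (x : ℝ) :
    0 ≤ truncGaussPdf C σ x := by
  rw [truncGaussPdf]
  split_ifs
  · have h1 : 0 < erf (C / σ / Real.sqrt 2) := erf_pos (by positivity)
    have h2 : 0 ≤ stdGauss (x / σ) := by rw [stdGauss]; positivity
    positivity
  · exact le_refl 0

lemma continuous_stdGauss : Continuous stdGauss := by
  unfold stdGauss; fun_prop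

lemma measurable_truncGaussPdf (C σ : ℝ) : Measurable (truncGaussPdf C σ) := by
  unfold truncGaussPdf
  exact Measurable.ite measurableSet_Icc
    ((continuous_stdGauss.comp (by fun_prop)).measurable.div_const _) measurable_const

lemma lint_conv (C σX σZ : ℝ) (hC : 0 < C) (hσ : 0 < σX) (hσZ : 0 < σZ) (u : ℝ) :
    ∫⁻ x, ENNReal.ofReal (truncGaussPdf C σX x)
        * ENNReal.ofReal (stdGauss ((u - x) / σZ) / σZ)
      = ENNReal.ofReal (sumPdf C σX σZ u) := by
  have hnn : ∀ x, 0 ≤ truncGaussPdf C σX x * stdGauss ((u - x) / σZ) / σZ := by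
    intro x
    have := truncGaussPdf_nonneg C σX hC hσ x
    have h2 : 0 ≤ stdGauss ((u - x) / σZ) := by rw [stdGauss]; positivity
    positivity
  have h1 : ∀ x, ENNReal.ofReal (truncGaussPdf C σX x)
        * ENNReal.ofReal (stdGauss ((u - x) / σZ) / σZ)
      = Set.indicator (Set.Icc (-C) C)
          (fun x => ENNReal.ofReal (truncGaussPdf C σX x * stdGauss ((u - x) / σZ) / σZ)) x := by
    intro x
    rw [← ENNReal.ofReal_mul (truncGaussPdf_nonneg C σX hC hσ x)]
    by_cases hx : x ∈ Set.Icc (-C) C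
    · rw [Set.indicator_of_mem hx, mul_div_assoc]
    · rw [Set.indicator_of_notMem hx, truncGaussPdf, if_neg hx]; simp
  simp_rw [h1]
  rw [lintegral_indicator measurableSet_Icc _]
  have hint : IntegrableOn (fun x => truncGaussPdf C σX x * stdGauss ((u - x) / σZ) / σZ)
      (Set.Icc (-C) C) volume := by
    have hcont : Continuous (fun x => stdGauss (x / σX) / (σX * erf ((C / σX) / Real.sqrt 2))
        * stdGauss ((u - x) / σZ) / σZ) := by
      exact (((continuous_stdGauss.comp (by fun_prop)).div_const _).mul
        (continuous_stdGauss.comp (by fun_prop))).div_const _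
    refine (hcont.integrableOn_Icc).congr_fun ?_ measurableSet_Icc
    intro x hx
    simp only [truncGaussPdf, if_pos hx]
  rw [← MeasureTheory.ofReal_integral_eq_lintegral_ofReal hint (ae_of_all _ fun x => hnn x)]
  congr 1
  rw [MeasureTheory.integral_Icc_eq_integral_Ioc,
    ← intervalIntegral.integral_of_le (by linarith : -C ≤ C)]
  exact conv_eq C σX σZ hC hσ hσZ u

/-- The convolution of the truncated Gaussian density with a centered Gaussian density of
standard deviation `σ_Z` has the closed form `sumPdf`; consequently, if `X̃` has the truncated
Gaussian law and `Z̃` is an independent centered Gaussian with standard deviation `σ_Z`, then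
`Y = X̃ + Z̃` has `sumPdf` as its density with respect to Lebesgue measure. -/
theorem truncGauss_add_gaussian_pdf {Ω : Type*} [MeasurableSpace Ω]
    (μ : Measure Ω) [IsProbabilityMeasure μ]
    (C σX σZ : ℝ) (hC : 0 < C) (hσ : 0 < σX) (hσZ : 0 < σZ)
    (Xt Zt : Ω → ℝ) (hXm : Measurable Xt) (hZm : Measurable Zt)
    (hlawX : μ.map Xt = volume.withDensity fun x => ENNReal.ofReal (truncGaussPdf C σX x))
    (hlawZ : μ.map Zt = gaussianReal 0 ⟨σZ ^ 2, sq_nonneg σZ⟩)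
    (hindep : IndepFun Xt Zt μ) :
    (∀ y : ℝ,
        ∫ x in (-C)..C, truncGaussPdf C σX x * stdGauss ((y - x) / σZ) / σZ
          = sumPdf C σX σZ y) ∧
      μ.map (fun ω => Xt ω + Zt ω)
        = volume.withDensity fun y => ENNReal.ofReal (sumPdf C σX σZ y) := by
  refine ⟨fun y => conv_eq C σX σZ hC hσ hσZ y, ?_⟩
  have hvne : (⟨σZ ^ 2, sq_nonneg σZ⟩ : NNReal) ≠ 0 := by
    intro h
    exact (pow_ne_zero 2 hσZ.ne') (congrArg NNReal.toReal h)
  set F : ℝ → ℝ≥0∞ := fun x => ENNReal.ofReal (truncGaussPdf C σX x) with hF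
  set G : ℝ → ℝ≥0∞ := fun z => ENNReal.ofReal (stdGauss (z / σZ) / σZ) with hG
  have hFm : Measurable F := (measurable_truncGaussPdf C σX).ennreal_ofReal
  have hGm : Measurable G :=
    (((continuous_stdGauss.comp (by fun_prop)).measurable).div_const σZ).ennreal_ofReal
  have hGpdf : gaussianPDF 0 ⟨σZ ^ 2, sq_nonneg σZ⟩ = G := by
    ext z
    unfold gaussianPDF; rw [hG]
    congr 1
    unfold gaussianPDFReal
    show (Real.sqrt (2 * π * σZ ^ 2))⁻¹ * Real.exp (-(z - 0) ^ 2 / (2 * σZ ^ 2)) = stdGauss (z / σZ) / σZ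
    rw [Real.sqrt_mul (by positivity) (σZ ^ 2), Real.sqrt_sq hσZ.le, stdGauss, sub_zero]
    have he : -z ^ 2 / (2 * σZ ^ 2) = -(z / σZ) ^ 2 / 2 := by
      rw [div_pow]; ring
    rw [he]
    have h2 : Real.sqrt (2 * π) ≠ 0 := by positivity
    field_simp
  have hlawZ' : μ.map Zt = volume.withDensity G := by
    rw [hlawZ, gaussianReal_of_var_ne_zero 0 hvne, hGpdf]
  haveI : IsProbabilityMeasure (volume.withDensity F) := by
    rw [← hlawX]; exact Measure.isProbabilityMeasure_map hXm.aemeasurable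
  haveI : IsProbabilityMeasure (volume.withDensity G) := by
    rw [← hlawZ']; exact Measure.isProbabilityMeasure_map hZm.aemeasurable
  have hprod := (indepFun_iff_map_prod_eq_prod_map_map hXm.aemeasurable
    hZm.aemeasurable).mp hindep
  have hmap : μ.map (fun ω => Xt ω + Zt ω)
      = ((volume.withDensity F).prod (volume.withDensity G)).map
          (fun p : ℝ × ℝ => p.1 + p.2) := by
    rw [← hlawX, ← hlawZ', ← hprod, Measure.map_map measurable_add (hXm.prodMk hZm)]
    rfl
  rw [hmap]
  ext t ht
  rw [Measure.map_apply measurable_add ht,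
    Measure.prod_apply (ht.preimage measurable_add)]
  have hstep1 : ∀ x : ℝ, (volume.withDensity G)
      (Prod.mk x ⁻¹' ((fun p : ℝ × ℝ => p.1 + p.2) ⁻¹' t)) = ∫⁻ u in t, G (u - x) := by
    intro x
    have hpre : MeasurableSet ((fun z : ℝ => x + z) ⁻¹' t) := ht.preimage (by fun_prop)
    have hid : Prod.mk x ⁻¹' ((fun p : ℝ × ℝ => p.1 + p.2) ⁻¹' t)
        = (fun z : ℝ => x + z) ⁻¹' t := rfl
    rw [hid, withDensity_apply _ hpre, ← lintegral_indicator hpre G]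
    have hptw : ∀ z : ℝ, ((fun z : ℝ => x + z) ⁻¹' t).indicator G z
        = t.indicator (fun u => G (u - x)) (x + z) := by
      intro z
      by_cases hz : x + z ∈ t
      · rw [Set.indicator_of_mem (by exact hz) G, Set.indicator_of_mem hz]
        simp
      · rw [Set.indicator_of_notMem (by exact hz) G, Set.indicator_of_notMem hz]
    simp_rw [hptw]
    rw [lintegral_add_left_eq_self (t.indicator fun u => G (u - x)) x,
      lintegral_indicator ht]
  simp_rw [hstep1]
  have hmeas2 : Measurable (fun x : ℝ => ∫⁻ u in t, G (u - x)) :=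
    Measurable.lintegral_prod_right (hGm.comp (measurable_snd.sub measurable_fst))
  rw [lintegral_withDensity_eq_lintegral_mul volume hFm hmeas2]
  have hstep2 : ∀ x : ℝ, (F * fun x => ∫⁻ u in t, G (u - x)) x
      = ∫⁻ u in t, F x * G (u - x) := by
    intro x
    simp only [Pi.mul_apply]
    rw [← lintegral_const_mul' (F x) _ ENNReal.ofReal_ne_top]
  simp_rw [hstep2]
  rw [lintegral_lintegral_swap
    ((hFm.comp measurable_fst).mul (hGm.comp (measurable_snd.sub measurable_fst))).aemeasurable]
  rw [withDensity_apply _ ht]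
  exact lintegral_congr fun u => lint_conv C σX σZ hC hσ hσZ u
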